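/- The orthogonality relation Σ_{k=j}^{n} w_{m,r}[n,k]_q · W_{m,r}[k,j]_q = δ_{nj} holds for all integers n ≥ j ≥ 0, where δ_{nj} = 1 if n = j and δ_{nj} = 0 otherwise. -/

import Mathlib

/-!
Write `φ_j(x) = ∏_{i<j} q^{-(r+im)} (x - [r+im]_q)`. The recurrence for `W` is exactly
`x φ_j = [mj+r]_q φ_j + q^{mj+r} φ_{j+1}`, so `x^k = ∑_j W[k,j] φ_j`. Substituting this
into `φ_n = ∑_k w[n,k] x^k` writes `φ_n` in the `φ_j` with coefficients
`∑_k w[n,k] W[k,j]`; as `φ_j` has degree `j`, the `φ_j` are linearly independent, so these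
coefficients are `δ_{nj}`.
-/

open Finset

/-- The `q`-integer `[s]_q = (q^s - 1)/(q - 1)` for an integer `s`. -/
noncomputable def qint (q : ℝ) (s : ℤ) : ℝ := (q ^ s - 1) / (q - 1)

/-- The `(q,r)`-Whitney numbers of the second kind `W_{m,r}[n,k]_q`, with `r : ℤ` so
that both `W_{m,r}` and `W_{m,-r}` are covered: `W[0,0] = 1`, `W[n,k] = 0` for `k > n`,
and `W[n,k] = q^(m(k-1)+r) W[n-1,k-1] + [mk+r]_q W[n-1,k]`. -/
noncomputable def qWhitney2 (q : ℝ) (m : ℕ) (r : ℤ) : ℕ → ℕ → ℝ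
  | 0, 0 => 1
  | 0, _ + 1 => 0
  | n + 1, 0 => qint q r * qWhitney2 q m r n 0
  | n + 1, k + 1 =>
      q ^ (m * k + r) * qWhitney2 q m r n k
        + qint q (m * (k + 1) + r) * qWhitney2 q m r n (k + 1)

open Polynomial

lemma qWhitney2_eq_zero_of_lt (q : ℝ) (m : ℕ) (r : ℤ) {n k : ℕ} (h : n < k) :
    qWhitney2 q m r n k = 0 := by
  induction n generalizing k with
  | zero => obtain ⟨k, rfl⟩ := Nat.exists_eq_succ_of_ne_zero h.ne'; rfl
  | succ n ih =>
    obtain ⟨k, rfl⟩ := Nat.exists_eq_succ_of_ne_zero (Nat.zero_lt_of_lt h).ne'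
    simp only [qWhitney2, ih (by omega : n < k), ih (by omega : n < k + 1), mul_zero, add_zero]

noncomputable def qFallingFactorial (q : ℝ) (m : ℕ) (r : ℤ) (j : ℕ) : ℝ[X] :=
  ∏ i ∈ range j, C (q ^ (-(r + i * m))) * (X - C (qint q (r + i * m)))

section qFallingFactorial

variable {q : ℝ} (m : ℕ) (r : ℤ)

local notation "φ" => qFallingFactorial q m r
local notation "W" => qWhitney2 q m r

lemma eval_qFallingFactorial (j : ℕ) (x : ℝ) :
    (φ j).eval x = ∏ i ∈ range j, q ^ (-(r + i * m)) * (x - qint q (r + i * m)) := by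
  simp [qFallingFactorial, eval_prod]

lemma qFallingFactorial_succ (j : ℕ) :
    φ (j + 1) = φ j * (C (q ^ (-(r + j * m))) * (X - C (qint q (r + j * m)))) :=
  prod_range_succ _ _

lemma degree_qFallingFactorial (hq : q ≠ 0) (j : ℕ) : (φ j).degree = j := by
  have hfactor (i : ℕ) : (C (q ^ (-(r + i * m))) * (X - C (qint q (r + i * m)))).degree = 1 := by
    rw [degree_C_mul (zpow_ne_zero _ hq), degree_X_sub_C]
  rw [qFallingFactorial, degree_prod, sum_congr rfl fun i _ ↦ hfactor i]
  simp

lemma linearIndependent_qFallingFactorial (hq : q ≠ 0) : LinearIndependent ℝ φ :=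
  (⟨φ, degree_qFallingFactorial m r hq⟩ : Polynomial.Sequence ℝ).linearIndependent

lemma X_mul_qFallingFactorial (hq : q ≠ 0) (j : ℕ) :
    X * φ j = qint q (m * j + r) • φ j + q ^ ((m : ℤ) * j + r) • φ (j + 1) := by
  have hcancel : C (q ^ (r + j * m)) * C (q ^ (-(r + j * m))) = 1 := by
    rw [← C_mul, ← zpow_add₀ hq, add_neg_cancel, zpow_zero, C_1]
  rw [qFallingFactorial_succ, smul_eq_C_mul, smul_eq_C_mul,
    show (m * j + r : ℤ) = r + j * m by ring]
  linear_combination -(φ j * (X - C (qint q (r + j * m)))) * hcancel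

lemma X_pow_eq_sum_qWhitney2_smul (hq : q ≠ 0) (N : ℕ) :
    (X : ℝ[X]) ^ N = ∑ j ∈ range (N + 1), W N j • φ j := by
  induction N with
  | zero => simp [qWhitney2, qFallingFactorial]
  | succ N ih =>
    have hW0 : W (N + 1) 0 = W N 0 * qint q (m * (0 : ℕ) + r) := by
      simp [qWhitney2, mul_comm]
    have hWsucc (j : ℕ) : W (N + 1) (j + 1) =
        W N j * q ^ ((m : ℤ) * j + r) + W N (j + 1) * qint q (m * (j + 1 : ℕ) + r) := by
      simp [qWhitney2, mul_comm]
    have hdiag : ∑ j ∈ range (N + 1), W N j • qint q (m * j + r) • φ j =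
        ∑ j ∈ range (N + 2), W N j • qint q (m * j + r) • φ j := by
      rw [sum_range_succ _ (N + 1), qWhitney2_eq_zero_of_lt q m r N.lt_succ_self, zero_smul,
        add_zero]
    calc (X : ℝ[X]) ^ (N + 1) = ∑ j ∈ range (N + 1), W N j • (X * φ j) := by
          simp_rw [pow_succ', ih, mul_sum, mul_smul_comm]
      _ = ∑ j ∈ range (N + 2), W N j • qint q (m * j + r) • φ j
            + ∑ j ∈ range (N + 1), W N j • q ^ ((m : ℤ) * j + r) • φ (j + 1) := by
          simp_rw [X_mul_qFallingFactorial m r hq, smul_add, sum_add_distrib, hdiag]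
      _ = ∑ j ∈ range (N + 2), W (N + 1) j • φ j := by
          rw [sum_range_succ', sum_range_succ' (fun j ↦ W (N + 1) j • φ j), hW0]
          simp_rw [hWsucc, add_smul, sum_add_distrib, smul_smul]
          abel

lemma qFallingFactorial_eq_sum_smul_qFallingFactorial (hq : q ≠ 0) {n : ℕ} (c : ℕ → ℝ)
    (hc : φ n = ∑ k ∈ range (n + 1), c k • X ^ k) :
    φ n = ∑ j ∈ range (n + 1), (∑ k ∈ Icc j n, c k * W k j) • φ j := by
  simp_rw [hc, X_pow_eq_sum_qWhitney2_smul m r hq, smul_sum, smul_smul, sum_smul]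
  refine sum_comm' fun k j ↦ ?_
  simp only [mem_range, mem_Icc]
  omega

lemma sum_mul_qWhitney2_eq_ite (hq : q ≠ 0) {n : ℕ} (c : ℕ → ℝ)
    (hc : φ n = ∑ k ∈ range (n + 1), c k • X ^ k) {j : ℕ} (hj : j ≤ n) :
    ∑ k ∈ Icc j n, c k * W k j = if n = j then 1 else 0 := by
  refine linearIndependent_iff'ₛ.mp (linearIndependent_qFallingFactorial m r hq)
    (range (n + 1)) (fun j ↦ ∑ k ∈ Icc j n, c k * W k j) (fun j ↦ if n = j then 1 else 0)
    ?_ j (mem_range.mpr (Nat.lt_succ_of_le hj))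
  rw [← qFallingFactorial_eq_sum_smul_qFallingFactorial m r hq c hc]
  simp [ite_smul]

end qFallingFactorial

theorem qWhitney_orthogonality_first_second_general (q : ℝ) (hq : 0 < q) (m r : ℕ)
    (w : ℕ → ℕ → ℝ)
    (hw : ∀ (n : ℕ) (x : ℝ),
      ∏ i ∈ Finset.range n, (q ^ (-((r : ℤ) + i * m)) * (x - qint q ((r : ℤ) + i * m))) =
        ∑ k ∈ Finset.range (n + 1), w n k * x ^ k)
    (n j : ℕ) (hjn : j ≤ n) :
    ∑ k ∈ Finset.Icc j n, w n k * qWhitney2 q m (r : ℤ) k j =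
      if n = j then (1 : ℝ) else 0 := by
  refine sum_mul_qWhitney2_eq_ite m r hq.ne' (w n) (Polynomial.funext fun x ↦ ?_) hjn
  rw [eval_qFallingFactorial, hw, eval_finsetSum]
  simp

theorem qWhitney_orthogonality_first_second (q : ℝ) (hq : 0 < q) (hq1 : q ≠ 1) (m r : ℕ) (hm : 0 < m) (hr : 0 < r)
    (w : ℕ → ℕ → ℝ)
    (hw : ∀ (n : ℕ) (x : ℝ),
      ∏ i ∈ Finset.range n, (q ^ (-((r : ℤ) + i * m)) * (x - qint q ((r : ℤ) + i * m))) =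
        ∑ k ∈ Finset.range (n + 1), w n k * x ^ k)
    (n j : ℕ) (hjn : j ≤ n) :
    ∑ k ∈ Finset.Icc j n, w n k * qWhitney2 q m (r : ℤ) k j =
      if n = j then (1 : ℝ) else 0 :=
  qWhitney_orthogonality_first_second_general q hq m r w hw n j hjn
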